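/- Let X be a 1-acyclic 2-dimensional cell complex whose 2-cells have attaching maps that are circuits of length at most N. If there is C ≥ 0 with FV_{X,ℤ}(k) ≤ C·k for all k, then the 1-skeleton Γ of X satisfies condition FZ_N and a weak linear isoperimetric inequality: every circuit γ in Γ satisfies [γ] = Σ_{i=1}^m εᵢ[γᵢ] in H₁-free terms (as 1-cycles, γ = Σ εᵢ γᵢ) with each γᵢ a circuit of length at most N, εᵢ = ±1, and m ≤ C·|γ|. -/

import Mathlib

open Finsupp

/-- A (combinatorial, oriented) graph: the 1-skeleton data of a complex. -/
structure CGraph where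
  V : Type
  E : Type
  ends : E → V × V

/-- ℓ¹-norm of an integral chain. -/
def l1Z {α : Type} (c : α →₀ ℤ) : ℕ := c.sum fun _ v => v.natAbs

/-- Two chains are disjoint if no basis element has nonzero coefficient in both. -/
def DisjointChains {α : Type} (a b : α →₀ ℤ) : Prop := ∀ x, a x = 0 ∨ b x = 0

namespace CGraph

variable (Γ : CGraph)

/-- Source vertex of a directed edge (an edge with an orientation bit). -/
def src (p : Γ.E × Bool) : Γ.V := if p.2 then (Γ.ends p.1).1 else (Γ.ends p.1).2

/-- Target vertex of a directed edge. -/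
def tgt (p : Γ.E × Bool) : Γ.V := if p.2 then (Γ.ends p.1).2 else (Γ.ends p.1).1

/-- A nonempty cyclically-consecutive list of directed edges. -/
def IsClosedPath (l : List (Γ.E × Bool)) : Prop :=
  l ≠ [] ∧ ∀ i : Fin l.length,
    Γ.tgt (l.get i) = Γ.src (l.get ⟨(↑i + 1) % l.length, Nat.mod_lt _ i.pos⟩)

/-- A circuit: a simple closed combinatorial path (no repeated edges or vertices). -/
def IsCircuit (l : List (Γ.E × Bool)) : Prop :=
  Γ.IsClosedPath l ∧ (l.map Prod.fst).Nodup ∧ (l.map Γ.src).Nodup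

/-- The 1-cycle induced by a closed path: coefficient ±1 on each traversed edge. -/
noncomputable def pathCycle (l : List (Γ.E × Bool)) : Γ.E →₀ ℤ :=
  (l.map fun p => Finsupp.single p.1 (if p.2 then (1 : ℤ) else -1)).sum

/-- The simplicial boundary map `C₁ → C₀`. -/
noncomputable def d1 (γ : Γ.E →₀ ℤ) : Γ.V →₀ ℤ :=
  γ.sum fun e c => c • (Finsupp.single (Γ.ends e).2 (1 : ℤ) - Finsupp.single (Γ.ends e).1 1)

/-- A 1-chain is a cycle if its boundary vanishes. -/
def IsCycle (γ : Γ.E →₀ ℤ) : Prop := Γ.d1 γ = 0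

/-- A graph is fine if each edge lies in only finitely many circuits of each bounded length. -/
def Fine : Prop :=
  ∀ (e : Γ.E) (L : ℕ),
    {l : List (Γ.E × Bool) | Γ.IsCircuit l ∧ e ∈ l.map Prod.fst ∧ l.length ≤ L}.Finite

/-- Walks from `u` to `v`. -/
def IsWalk : List (Γ.E × Bool) → Γ.V → Γ.V → Prop
  | [], u, v => u = v
  | p :: l, u, v => Γ.src p = u ∧ IsWalk l (Γ.tgt p) v

/-- Combinatorial distance in a graph (∞ if there is no walk). -/
noncomputable def gdist (u v : Γ.V) : ℕ∞ :=
  ⨅ l ∈ {l : List (Γ.E × Bool) | Γ.IsWalk l u v}, (l.length : ℕ∞)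

def Connected : Prop := ∀ u v : Γ.V, Γ.gdist u v < ⊤

/-- Gromov hyperbolicity via the four-point condition. -/
def Hyperbolic : Prop :=
  ∃ δ : ℕ, ∀ x y z w : Γ.V,
    Γ.gdist x y + Γ.gdist z w ≤
      max (Γ.gdist x z + Γ.gdist y w) (Γ.gdist x w + Γ.gdist y z) + (δ : ℕ∞)

end CGraph

/-- A combinatorial 2-complex: a graph together with a set of 2-cells, each with a
boundary 1-chain. -/
structure TwoComplex extends toGraph : CGraph where
  F : Type
  fb : F → E →₀ ℤ

namespace TwoComplex

variable (X : TwoComplex)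

/-- The boundary map `C₂ → C₁` over ℤ. -/
noncomputable def d2 (μ : X.F →₀ ℤ) : X.E →₀ ℤ := μ.sum fun f c => c • X.fb f

/-- The filling norm `‖γ‖_∂` over ℤ (∞ if `γ` bounds no 2-chain). -/
noncomputable def fillNorm (γ : X.E →₀ ℤ) : ℕ∞ :=
  ⨅ μ ∈ {μ : X.F →₀ ℤ | X.d2 μ = γ}, (l1Z μ : ℕ∞)

/-- The homological Dehn function of `X` over ℤ. -/
noncomputable def FV (k : ℕ) : ℕ∞ :=
  ⨆ γ ∈ {γ : X.E →₀ ℤ | X.toGraph.IsCycle γ ∧ l1Z γ ≤ k}, X.fillNorm γ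

end TwoComplex

/-! A circuit `γ` is a 1-cycle with `‖γ‖₁ ≤ |γ|`, so the bound on `FV` provides a 2-chain `μ`
with `∂μ = γ` and `‖μ‖₁ ≤ C |γ|`. Expanding `μ` as a signed sum of `‖μ‖₁` single 2-cells and
replacing each cell by its attaching circuit writes `γ` as a signed sum of at most `C |γ|`
circuits of length at most `N`. -/

section IntegralChains

variable {α : Type}

lemma l1Z_eq_sum_of_support_subset (c : α →₀ ℤ) {s : Finset α} (h : c.support ⊆ s) :
    l1Z c = ∑ x ∈ s, (c x).natAbs :=
  Finset.sum_subset h fun x _ hx => by simp [Finsupp.notMem_support_iff.mp hx]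

lemma l1Z_add_le (a b : α →₀ ℤ) : l1Z (a + b) ≤ l1Z a + l1Z b := by
  classical
  rw [l1Z_eq_sum_of_support_subset (a + b) Finsupp.support_add,
    l1Z_eq_sum_of_support_subset a Finset.subset_union_left,
    l1Z_eq_sum_of_support_subset b Finset.subset_union_right, ← Finset.sum_add_distrib]
  exact Finset.sum_le_sum fun x _ => Int.natAbs_add_le _ _

lemma l1Z_list_sum_le (L : List (α →₀ ℤ)) : l1Z L.sum ≤ (L.map l1Z).sum := by
  induction L with
  | nil => simp [l1Z]
  | cons a t ih =>
    simp only [List.sum_cons, List.map_cons]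
    exact (l1Z_add_le a t.sum).trans (by omega)

lemma l1Z_single (a : α) (c : ℤ) : l1Z (Finsupp.single a c) = c.natAbs :=
  Finsupp.sum_single_index rfl

noncomputable def signedUnitList (μ : α →₀ ℤ) : List (α × ℤ) :=
  μ.support.toList.flatMap fun f => List.replicate (μ f).natAbs (f, (μ f).sign)

lemma length_signedUnitList (μ : α →₀ ℤ) : (signedUnitList μ).length = l1Z μ := by
  simp only [signedUnitList, List.length_flatMap, List.length_replicate]
  exact Finset.sum_map_toList μ.support fun f => (μ f).natAbs

lemma sign_eq_one_or_neg_one_of_mem_signedUnitList {μ : α →₀ ℤ} {p : α × ℤ}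
    (hp : p ∈ signedUnitList μ) : p.2 = 1 ∨ p.2 = -1 := by
  obtain ⟨f, hf, hpf⟩ := List.mem_flatMap.mp hp
  rw [List.eq_of_mem_replicate hpf]
  have hμf : μ f ≠ 0 := Finsupp.mem_support_iff.mp (Finset.mem_toList.mp hf)
  rcases hμf.lt_or_gt with hneg | hpos
  · exact Or.inr (Int.sign_eq_neg_one_of_neg hneg)
  · exact Or.inl (Int.sign_eq_one_of_pos hpos)

lemma sum_map_signedUnitList {M : Type*} [AddCommGroup M] (μ : α →₀ ℤ) (b : α → M) :
    ((signedUnitList μ).map fun p => p.2 • b p.1).sum = μ.sum fun f c => c • b f := by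
  rw [signedUnitList, List.map_flatMap, List.flatMap_def, List.sum_flatten, List.map_map]
  simp only [Function.comp_def, List.map_replicate, List.sum_replicate]
  rw [Finset.sum_map_toList]
  refine Finset.sum_congr rfl fun f _ => ?_
  rw [← natCast_zsmul, smul_smul, mul_comm, Int.sign_mul_natAbs]

end IntegralChains

namespace CGraph

variable (Γ : CGraph)

noncomputable def d1Hom : (Γ.E →₀ ℤ) →+ (Γ.V →₀ ℤ) :=
  AddMonoidHom.mk' Γ.d1 fun _ _ =>
    Finsupp.sum_add_index' (fun _ => zero_smul _ _) fun _ _ _ => add_smul _ _ _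

lemma d1Hom_apply (γ : Γ.E →₀ ℤ) : Γ.d1Hom γ = Γ.d1 γ := rfl

lemma d1_signedEdge (p : Γ.E × Bool) :
    Γ.d1 (Finsupp.single p.1 (if p.2 then 1 else -1)) =
      Finsupp.single (Γ.tgt p) 1 - Finsupp.single (Γ.src p) 1 := by
  rw [d1, Finsupp.sum_single_index (by simp), tgt, src]
  split <;> simp

/-- The boundary of a closed path telescopes: each edge's target is the next edge's source. -/
lemma isCycle_pathCycle {l : List (Γ.E × Bool)} (hl : Γ.IsClosedPath l) :
    Γ.IsCycle (Γ.pathCycle l) := by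
  obtain ⟨hne, hnext⟩ := hl
  have : NeZero l.length := ⟨fun h => hne (List.length_eq_zero_iff.mp h)⟩
  have htgt_eq_src : ∑ i : Fin l.length, Finsupp.single (Γ.tgt l[(i : ℕ)]) (1 : ℤ) =
      ∑ i : Fin l.length, Finsupp.single (Γ.src l[(i : ℕ)]) 1 := by
    refine Fintype.sum_equiv (Equiv.addRight 1) _ _ fun i => ?_
    have hsucc : i + 1 = ⟨(i + 1) % l.length, Nat.mod_lt _ i.pos⟩ := by
      ext; simp [Fin.val_add, Nat.add_mod]
    simp only [Equiv.coe_addRight, hsucc]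
    exact congrArg (Finsupp.single · 1) (hnext i)
  change Γ.d1Hom _ = 0
  rw [pathCycle, map_list_sum, List.map_map, ← Fin.sum_univ_fun_getElem]
  simp only [Function.comp_apply, d1Hom_apply, d1_signedEdge, Finset.sum_sub_distrib]
  exact sub_eq_zero.mpr htgt_eq_src

lemma l1Z_pathCycle_le (l : List (Γ.E × Bool)) : l1Z (Γ.pathCycle l) ≤ l.length := by
  refine (l1Z_list_sum_le _).trans_eq ?_
  rw [List.map_map, List.sum_eq_card_nsmul _ 1, List.length_map, smul_eq_mul, mul_one]
  intro n hn
  obtain ⟨p, -, rfl⟩ := List.mem_map.mp hn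
  rw [Function.comp_apply, l1Z_single]
  split <;> rfl

end CGraph

namespace TwoComplex

variable (X : TwoComplex)

lemma exists_d2_eq_of_fillNorm_le {γ : X.E →₀ ℤ} {n : ℕ} (h : X.fillNorm γ ≤ n) :
    ∃ μ : X.F →₀ ℤ, X.d2 μ = γ ∧ l1Z μ ≤ n := by
  have hlt : X.fillNorm γ < (n + 1 : ℕ) := h.trans_lt (by exact_mod_cast n.lt_succ_self)
  obtain ⟨μ, hμ⟩ := iInf_lt_iff.mp hlt
  obtain ⟨hd2, hnorm⟩ := iInf_lt_iff.mp hμ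
  exact ⟨μ, hd2, Nat.lt_succ_iff.mp (by exact_mod_cast hnorm)⟩

lemma fillNorm_le_FV {γ : X.E →₀ ℤ} (hγ : X.toGraph.IsCycle γ) {k : ℕ} (hk : l1Z γ ≤ k) :
    X.fillNorm γ ≤ X.FV k :=
  le_iSup₂ (f := fun γ _ => X.fillNorm γ) γ ⟨hγ, hk⟩

lemma exists_d2_eq_of_FV_le {C : ℕ} (hFV : ∀ k : ℕ, X.FV k ≤ ((C * k : ℕ) : ℕ∞))
    {γ : X.E →₀ ℤ} (hγ : X.toGraph.IsCycle γ) {k : ℕ} (hk : l1Z γ ≤ k) :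
    ∃ μ : X.F →₀ ℤ, X.d2 μ = γ ∧ l1Z μ ≤ C * k :=
  X.exists_d2_eq_of_fillNorm_le ((X.fillNorm_le_FV hγ hk).trans (hFV k))

end TwoComplex

theorem FZ_and_weak_linear_isoperimetric_general (X : TwoComplex)
    (N : ℕ)
    (hcells : ∀ f : X.F, ∃ l : List (X.E × Bool),
      X.toGraph.IsCircuit l ∧ l.length ≤ N ∧ X.fb f = X.toGraph.pathCycle l)
    (C : ℕ) (hFV : ∀ k : ℕ, X.FV k ≤ ((C * k : ℕ) : ℕ∞)) :
    ∀ l : List (X.E × Bool), X.toGraph.IsCircuit l →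
      ∃ cs : List (List (X.E × Bool) × ℤ),
        (∀ p ∈ cs, X.toGraph.IsCircuit p.1 ∧ p.1.length ≤ N ∧ (p.2 = 1 ∨ p.2 = -1)) ∧
        X.toGraph.pathCycle l = (cs.map fun p => p.2 • X.toGraph.pathCycle p.1).sum ∧
        cs.length ≤ C * l.length := by
  intro l hl
  obtain ⟨μ, hμ, hμnorm⟩ := X.exists_d2_eq_of_FV_le hFV
    (X.toGraph.isCycle_pathCycle hl.1) (X.toGraph.l1Z_pathCycle_le l)
  choose cell hcircuit hlength hfb using hcells
  refine ⟨(signedUnitList μ).map fun p => (cell p.1, p.2), fun p hp => ?_, ?_, ?_⟩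
  · obtain ⟨q, hq, rfl⟩ := List.mem_map.mp hp
    exact ⟨hcircuit q.1, hlength q.1, sign_eq_one_or_neg_one_of_mem_signedUnitList (p := q) hq⟩
  · rw [← hμ, TwoComplex.d2, ← sum_map_signedUnitList, List.map_map]
    simp only [Function.comp_def, hfb]
  · rwa [List.length_map, length_signedUnitList]

/-- If X is a 1-acyclic 2-complex whose 2-cells are attached along
circuits of length at most N and FV_{X,ℤ}(k) ≤ C·k, then the 1-skeleton satisfies
condition FZ_N with a weak linear isoperimetric inequality: every circuit is a signed
sum of at most C·|γ| circuits of length at most N. -/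
theorem FZ_and_weak_linear_isoperimetric (X : TwoComplex)
    (hbd : ∀ f : X.F, X.toGraph.d1 (X.fb f) = 0)
    (hconn : X.toGraph.Connected)
    (hH1 : ∀ γ : X.E →₀ ℤ, X.toGraph.IsCycle γ → ∃ μ : X.F →₀ ℤ, X.d2 μ = γ)
    (N : ℕ)
    (hcells : ∀ f : X.F, ∃ l : List (X.E × Bool),
      X.toGraph.IsCircuit l ∧ l.length ≤ N ∧ X.fb f = X.toGraph.pathCycle l)
    (C : ℕ) (hFV : ∀ k : ℕ, X.FV k ≤ ((C * k : ℕ) : ℕ∞)) :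
    ∀ l : List (X.E × Bool), X.toGraph.IsCircuit l →
      ∃ cs : List (List (X.E × Bool) × ℤ),
        (∀ p ∈ cs, X.toGraph.IsCircuit p.1 ∧ p.1.length ≤ N ∧ (p.2 = 1 ∨ p.2 = -1)) ∧
        X.toGraph.pathCycle l = (cs.map fun p => p.2 • X.toGraph.pathCycle p.1).sum ∧
        cs.length ≤ C * l.length :=
  FZ_and_weak_linear_isoperimetric_general X N hcells C hFV
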